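/- In SSL, for distinct agents a, b, both S_aφ → K_a¬K_bφ and S_aφ → K_a¬K_b¬φ are derivable. -/

import Mathlib

/-- Formulas of the epistemic-secrecy language: atoms, ⊤, ¬, ∧, K_a, S_a
(→, ↔, ⊥ are defined by abbreviation). -/
inductive Form (A P : Type) : Type where
  | atom : P → Form A P
  | top : Form A P
  | neg : Form A P → Form A P
  | and : Form A P → Form A P → Form A P
  | K : A → Form A P → Form A P
  | S : A → Form A P → Form A P

namespace Form
variable {A P : Type}
/-- Material implication, defined from ¬ and ∧. -/
def imp (φ ψ : Form A P) : Form A P := neg (and φ (neg ψ))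
/-- Biconditional. -/
def iff (φ ψ : Form A P) : Form A P := and (imp φ ψ) (imp ψ φ)
/-- Falsum. -/
def bot : Form A P := neg top
end Form

/-- A boolean interpretation of formulas: any assignment of truth values to formulas
that respects ⊤, ¬ and ∧ (treating atoms and modal formulas as atomic). -/
def PropEval {A P : Type} (g : Form A P → Prop) : Prop :=
  g Form.top ∧ (∀ φ : Form A P, g (Form.neg φ) ↔ ¬ g φ) ∧
    (∀ φ ψ : Form A P, g (Form.and φ ψ) ↔ (g φ ∧ g ψ))

/-- The Hilbert system SSL: all instances of propositional tautologies, the S5 axioms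
(K), (T), (4), (5) for each K_a, the secrecy axioms (S1) S_aφ → K_aφ,
(S2) S_aφ → ¬K_bφ for b ≠ a, (S4) S_aφ → K_aS_aφ, with rules modus ponens,
knowledge necessitation, and replacement of provable equivalents under S_a. -/
inductive Prov {A P : Type} : Form A P → Prop
  | taut (φ : Form A P) :
      (∀ g : Form A P → Prop, PropEval g → g φ) → Prov φ
  | axK (a : A) (φ ψ : Form A P) :
      Prov ((Form.K a (φ.imp ψ)).imp ((Form.K a φ).imp (Form.K a ψ)))
  | axT (a : A) (φ : Form A P) : Prov ((Form.K a φ).imp φ)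
  | ax4 (a : A) (φ : Form A P) : Prov ((Form.K a φ).imp (Form.K a (Form.K a φ)))
  | ax5 (a : A) (φ : Form A P) :
      Prov ((Form.neg (Form.K a φ)).imp (Form.K a (Form.neg (Form.K a φ))))
  | axS1 (a : A) (φ : Form A P) : Prov ((Form.S a φ).imp (Form.K a φ))
  | axS2 {a b : A} (φ : Form A P) :
      b ≠ a → Prov ((Form.S a φ).imp (Form.neg (Form.K b φ)))
  | axS4 (a : A) (φ : Form A P) : Prov ((Form.S a φ).imp (Form.K a (Form.S a φ)))
  | mp {φ ψ : Form A P} : Prov (φ.imp ψ) → Prov φ → Prov ψ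
  | nec (a : A) {φ : Form A P} : Prov φ → Prov (Form.K a φ)
  | re (a : A) {φ ψ : Form A P} :
      Prov (φ.iff ψ) → Prov ((Form.S a φ).iff (Form.S a ψ))

namespace PropEval

variable {A P : Type} {g : Form A P → Prop}

theorem imp_iff (hg : PropEval g) (φ ψ : Form A P) : g (φ.imp ψ) ↔ (g φ → g ψ) := by
  rw [Form.imp, hg.2.1, hg.2.2, hg.2.1]
  tauto

end PropEval

namespace Prov

variable {A P : Type} {φ ψ χ : Form A P}

theorem imp_trans (h₁ : Prov (φ.imp ψ)) (h₂ : Prov (ψ.imp χ)) : Prov (φ.imp χ) :=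
  mp (mp (taut ((φ.imp ψ).imp ((ψ.imp χ).imp (φ.imp χ))) fun _ hg => by
    simp only [hg.imp_iff]; tauto) h₁) h₂

theorem imp_neg_of_imp_of_imp_neg (h₁ : Prov (φ.imp χ)) (h₂ : Prov (ψ.imp χ.neg)) :
    Prov (φ.imp ψ.neg) :=
  mp (mp (taut ((φ.imp χ).imp ((ψ.imp χ.neg).imp (φ.imp ψ.neg))) fun _ hg => by
    simp only [hg.imp_iff, hg.2.1]; tauto) h₁) h₂

theorem K_mono (a : A) (h : Prov (φ.imp ψ)) : Prov ((Form.K a φ).imp (Form.K a ψ)) :=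
  mp (axK a φ ψ) (nec a h)

theorem imp_K_of_imp {a : A} (hψ : Prov (ψ.imp (Form.K a ψ))) (h : Prov (ψ.imp χ)) :
    Prov (ψ.imp (Form.K a χ)) :=
  imp_trans hψ (K_mono a h)

theorem S_imp_self (a : A) (φ : Form A P) : Prov ((Form.S a φ).imp φ) :=
  imp_trans (axS1 a φ) (axT a φ)

theorem S_imp_not_K_neg (a b : A) (φ : Form A P) :
    Prov ((Form.S a φ).imp (Form.K b φ.neg).neg) :=
  imp_neg_of_imp_of_imp_neg (S_imp_self a φ) (axT b φ.neg)

end Prov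

/-- In SSL, for distinct agents `a, b`, both `S_a φ → K_a ¬K_b φ` and
`S_a φ → K_a ¬K_b ¬φ` are derivable. -/
theorem ssl_owner_knows_ignorance {A P : Type} (a b : A) (hab : a ≠ b) (φ : Form A P) :
    Prov ((Form.S a φ).imp (Form.K a (Form.neg (Form.K b φ)))) ∧
    Prov ((Form.S a φ).imp (Form.K a (Form.neg (Form.K b (Form.neg φ))))) :=
  ⟨Prov.imp_K_of_imp (Prov.axS4 a φ) (Prov.axS2 φ hab.symm),
    Prov.imp_K_of_imp (Prov.axS4 a φ) (Prov.S_imp_not_K_neg a b φ)⟩
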